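/- arXiv:2304.10923 — 3 statements merged into one kernel-verified Lean document; each statement's English description precedes it below -/
import Mathlib

section
/- The map V : ℝ^(n-1) → ℝ^n defined by V(x') = (-x', 1) / sqrt(1 + |x'|²) is Lipschitz continuous with Lipschitz constant 1. -/
/-!
`V x` is the normalization of `(-x, 1)`. The map `x ↦ (-x, 1)` is an affine isometry into the
region `‖u‖ ≥ 1`, and on that region `u ↦ u / ‖u‖` is `1`-Lipschitz: with `a = ‖u‖`, `b = ‖v‖`,
`p = ⟪u, v⟫`, the inequality `‖u/a - v/b‖² ≤ ‖u - v‖²` multiplied by `ab` becomes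
`0 ≤ ab (a - b)² + 2 (ab - p) (ab - 1)`.
-/

theorem lipschitzOnWith_normalize {E : Type*} [NormedAddCommGroup E]
    [InnerProductSpace ℝ E] :
    LipschitzOnWith 1 (NormedSpace.normalize : E → E) {u | 1 ≤ ‖u‖} := by
  refine LipschitzOnWith.of_dist_le_mul fun u (hu : 1 ≤ ‖u‖) v (hv : 1 ≤ ‖v‖) => ?_
  have hinner : inner ℝ (NormedSpace.normalize u) (NormedSpace.normalize v)
      = inner ℝ u v / (‖u‖ * ‖v‖) := by
    rw [NormedSpace.normalize, NormedSpace.normalize, real_inner_smul_left,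
      real_inner_smul_right]
    ring
  have hsq : ‖NormedSpace.normalize u - NormedSpace.normalize v‖ ^ 2 ≤ ‖u - v‖ ^ 2 := by
    rw [norm_sub_sq_real, norm_sub_sq_real, hinner,
      NormedSpace.norm_normalize_eq_one_iff.2 (norm_pos_iff.1 (by linarith)),
      NormedSpace.norm_normalize_eq_one_iff.2 (norm_pos_iff.1 (by linarith)), one_pow]
    have hp : inner ℝ u v ≤ ‖u‖ * ‖v‖ := real_inner_le_norm u v
    generalize inner ℝ u v = p at hp ⊢
    generalize ‖u‖ = a at hu hp ⊢
    generalize ‖v‖ = b at hv hp ⊢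
    have hab : 1 ≤ a * b := one_le_mul_of_one_le_of_one_le hu hv
    have : a ^ 2 - 2 * p + b ^ 2 - (1 - 2 * (p / (a * b)) + 1)
        = (a * b * (a - b) ^ 2 + 2 * (a * b - p) * (a * b - 1)) / (a * b) := by
      field_simp
      ring
    rw [← sub_nonneg, this]
    have := mul_nonneg (sub_nonneg.2 hp) (sub_nonneg.2 hab)
    positivity
  rw [NNReal.coe_one, one_mul, dist_eq_norm, dist_eq_norm]
  exact pow_le_pow_iff_left₀ (norm_nonneg _) (norm_nonneg _) two_ne_zero |>.1 hsq

theorem EuclideanSpace.norm_sq_eq_sum_castSucc_add_last {m : ℕ}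
    (v : EuclideanSpace ℝ (Fin (m + 1))) :
    ‖v‖ ^ 2 = ∑ i : Fin m, v i.castSucc ^ 2 + v (Fin.last m) ^ 2 := by
  rw [EuclideanSpace.real_norm_sq_eq, Fin.sum_univ_castSucc]

section graphNormal

variable {m : ℕ}

/-- The upward normal to the graph of a function whose gradient is `x`. -/
def graphNormal (x : EuclideanSpace ℝ (Fin m)) : EuclideanSpace ℝ (Fin (m + 1)) :=
  WithLp.toLp 2 fun i => if h : (i : ℕ) < m then -x ⟨i, h⟩ else 1

@[simp]
theorem graphNormal_castSucc (x : EuclideanSpace ℝ (Fin m)) (i : Fin m) :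
    graphNormal x i.castSucc = -x i := by
  simp [graphNormal]

@[simp]
theorem graphNormal_last (x : EuclideanSpace ℝ (Fin m)) : graphNormal x (Fin.last m) = 1 := by
  simp [graphNormal]

theorem norm_graphNormal (x : EuclideanSpace ℝ (Fin m)) :
    ‖graphNormal x‖ = √(1 + ‖x‖ ^ 2) := by
  rw [eq_comm, Real.sqrt_eq_iff_eq_sq (by positivity) (norm_nonneg _),
    EuclideanSpace.norm_sq_eq_sum_castSucc_add_last, EuclideanSpace.real_norm_sq_eq]
  simp [add_comm]

theorem one_le_norm_graphNormal (x : EuclideanSpace ℝ (Fin m)) : 1 ≤ ‖graphNormal x‖ := by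
  rw [norm_graphNormal]
  exact Real.one_le_sqrt.2 (le_add_of_nonneg_right (by positivity))

theorem isometry_graphNormal : Isometry (graphNormal (m := m)) := by
  refine Isometry.of_dist_eq fun x y => ?_
  rw [dist_eq_norm, dist_eq_norm, ← sq_eq_sq₀ (norm_nonneg _) (norm_nonneg _),
    EuclideanSpace.norm_sq_eq_sum_castSucc_add_last, EuclideanSpace.real_norm_sq_eq]
  simp only [PiLp.sub_apply, graphNormal_castSucc, graphNormal_last, sub_self,
    zero_pow two_ne_zero, add_zero]
  exact Finset.sum_congr rfl fun i _ => by ring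

end graphNormal

theorem stmt0_general (m : ℕ)
    (V : EuclideanSpace ℝ (Fin m) → EuclideanSpace ℝ (Fin (m + 1)))
    (hV : ∀ (x : EuclideanSpace ℝ (Fin m)) (i : Fin (m + 1)),
      V x i = (if h : (i : ℕ) < m then -x ⟨i, h⟩ else 1) / Real.sqrt (1 + ‖x‖ ^ 2)) :
    LipschitzWith 1 V := by
  have hV_eq : V = NormedSpace.normalize ∘ graphNormal := by
    ext x i
    rw [hV, Function.comp_apply, NormedSpace.normalize, PiLp.smul_apply, norm_graphNormal,
      smul_eq_mul, inv_mul_eq_div]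
    rfl
  have hmaps : Set.MapsTo (graphNormal (m := m)) Set.univ {u | 1 ≤ ‖u‖} :=
    fun x _ => one_le_norm_graphNormal x
  rw [hV_eq, ← lipschitzOnWith_univ]
  simpa only [mul_one] using
    lipschitzOnWith_normalize.comp isometry_graphNormal.lipschitz.lipschitzOnWith hmaps

/-- The map `V : ℝ^(n-1) → ℝ^n`, `V(x') = (-x', 1)/√(1+|x'|²)`,
is Lipschitz with constant 1. Here `m = n - 1 ≥ 1`. -/
theorem stmt0 (m : ℕ) (hm : 1 ≤ m)
    (V : EuclideanSpace ℝ (Fin m) → EuclideanSpace ℝ (Fin (m + 1)))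
    (hV : ∀ (x : EuclideanSpace ℝ (Fin m)) (i : Fin (m + 1)),
      V x i = (if h : (i : ℕ) < m then -x ⟨i, h⟩ else 1) / Real.sqrt (1 + ‖x‖ ^ 2)) :
    LipschitzWith 1 V :=
  stmt0_general m V hV
end

section
/- Let E ⊆ ℝ^n be a set of finite perimeter and finite volume, and suppose B_r(x) ⊆ E. Then for every λ ≥ n/r and every measurable F ⊆ E of finite perimeter, P(F ∪ B_r(x)) + λ|E ∖ (F ∪ B_r(x))| ≤ P(F) + λ|E ∖ F|. Moreover, if λ > n/r and equality holds, then |B_r(x) ∖ F| = 0. -/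
open MeasureTheory Metric Set
open scoped ENNReal

/-!
For a test field `φ` with `‖φ‖ ≤ 1`, interpolate near the ball between `φ` and the calibration
`T y = (y - x) / r` (`radialField`) of `B = B_r(x)`, whose divergence is `n / r`:
`ψ = φ + η • (T - φ)` with a cutoff `η` (`ballCutoff`) equal to `1` well inside `B` and to `0`
outside it. The correction `ψ - φ` has
compact support and its divergence vanishes off `B`, so
`∫_{F ∪ B} div φ = ∫_{F ∪ B} div ψ = ∫_F div ψ + ∫_{B \ F} div ψ`; moreover `‖ψ‖ ≤ 1` and
`div ψ ≤ n / r` except on a thin annulus inside `∂B`. Hence `P(F ∪ B) ≤ P(F) + (n / r) |B \ F|`,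
and both claims follow from `|E \ F| = |E \ (F ∪ B)| + |B \ F|`.
-/

/-- The perimeter of `E` relative to `U ⊆ ℝ^n`, via the classical supremum over
compactly supported `C¹` vector fields of norm at most one. -/
noncomputable def perim (n : ℕ) (E U : Set (EuclideanSpace ℝ (Fin n))) : ℝ≥0∞ :=
  ⨆ (φ : EuclideanSpace ℝ (Fin n) → EuclideanSpace ℝ (Fin n)) (_ : ContDiff ℝ 1 φ)
    (_ : HasCompactSupport φ) (_ : tsupport φ ⊆ U) (_ : ∀ x, ‖φ x‖ ≤ 1),
    ENNReal.ofReal (∫ x in E, ∑ i, fderiv ℝ φ x (EuclideanSpace.single i 1) i)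

open Filter Topology

theorem integral_fderiv_apply_eq_zero {E F : Type*} [NormedAddCommGroup E] [NormedSpace ℝ E]
    [FiniteDimensional ℝ E] [MeasurableSpace E] [BorelSpace E] [NormedAddCommGroup F]
    [NormedSpace ℝ F] {μ : Measure E} [μ.IsAddHaarMeasure] {X : E → F}
    (hX : ContDiff ℝ 1 X) (hXc : HasCompactSupport X) (v : E) :
    ∫ y, fderiv ℝ X y v ∂μ = 0 := by
  have hX' : Continuous fun y => fderiv ℝ X y v :=
    (hX.continuous_fderiv one_ne_zero).clm_apply continuous_const
  have := integral_smul_fderiv_eq_neg_fderiv_smul_of_integrable (f := fun _ => (1 : ℝ)) (g := X)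
    (v := v) (μ := μ) (by simp)
    (by simpa using hX'.integrable_of_hasCompactSupport (hXc.fderiv_apply (𝕜 := ℝ) v))
    (by simpa using hX.continuous.integrable_of_hasCompactSupport hXc)
    (fun _ _ => differentiableAt_const _) (fun y _ => hX.differentiable one_ne_zero y)
  simpa using this

section Divergence

variable {ι : Type*} [Fintype ι] [DecidableEq ι]

noncomputable def divergence (X : EuclideanSpace ℝ ι → EuclideanSpace ℝ ι)
    (y : EuclideanSpace ℝ ι) : ℝ :=
  ∑ i, fderiv ℝ X y (EuclideanSpace.single i 1) i

variable {X Y : EuclideanSpace ℝ ι → EuclideanSpace ℝ ι} {y : EuclideanSpace ℝ ι}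

theorem ContDiff.continuous_divergence (hX : ContDiff ℝ 1 X) : Continuous (divergence X) :=
  continuous_finsetSum _ fun i _ => (EuclideanSpace.proj i).continuous.comp
    ((hX.continuous_fderiv one_ne_zero).clm_apply continuous_const)

theorem HasCompactSupport.divergence (hX : HasCompactSupport X) :
    HasCompactSupport (divergence X) :=
  (hX.fderiv (𝕜 := ℝ)).mono fun y hy h0 => hy (by simp [_root_.divergence, h0])

theorem integral_divergence_eq_zero (hX : ContDiff ℝ 1 X) (hXc : HasCompactSupport X) :
    ∫ y, divergence X y = 0 := by
  have hint (i : ι) : Integrable fun y => fderiv ℝ X y (EuclideanSpace.single i 1) :=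
    ((hX.continuous_fderiv one_ne_zero).clm_apply continuous_const).integrable_of_hasCompactSupport
      (hXc.fderiv_apply (𝕜 := ℝ) _)
  have hcoord (i : ι) : ∫ y, fderiv ℝ X y (EuclideanSpace.single i 1) i = 0 := by
    have := (EuclideanSpace.proj (𝕜 := ℝ) i).integral_comp_comm (hint i)
    rw [integral_fderiv_apply_eq_zero hX hXc] at this
    simpa using this
  unfold divergence
  rw [integral_finsetSum _ fun i _ => ((EuclideanSpace.proj (𝕜 := ℝ) i).integrable_comp (hint i) :
    Integrable fun y => fderiv ℝ X y (EuclideanSpace.single i 1) i)]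
  exact Finset.sum_eq_zero fun i _ => hcoord i

theorem integrable_divergence (hX : ContDiff ℝ 1 X) (hXc : HasCompactSupport X) :
    Integrable (divergence X) :=
  hX.continuous_divergence.integrable_of_hasCompactSupport hXc.divergence

theorem setIntegral_divergence_eq_zero (hX : ContDiff ℝ 1 X) (hXc : HasCompactSupport X)
    {S : Set (EuclideanSpace ℝ ι)} (hS : ∀ y ∉ S, divergence X y = 0) :
    ∫ y in S, divergence X y = 0 := by
  rw [setIntegral_eq_integral_of_forall_compl_eq_zero hS, integral_divergence_eq_zero hX hXc]

theorem divergence_add (hX : DifferentiableAt ℝ X y) (hY : DifferentiableAt ℝ Y y) :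
    divergence (X + Y) y = divergence X y + divergence Y y := by
  rw [divergence, (hX.hasFDerivAt.add hY.hasFDerivAt).fderiv]
  simp [divergence, Finset.sum_add_distrib]

theorem divergence_sub (hX : DifferentiableAt ℝ X y) (hY : DifferentiableAt ℝ Y y) :
    divergence (X - Y) y = divergence X y - divergence Y y := by
  rw [divergence, (hX.hasFDerivAt.sub hY.hasFDerivAt).fderiv]
  simp [divergence, Finset.sum_sub_distrib]

theorem sum_apply_single_mul (L : EuclideanSpace ℝ ι →L[ℝ] ℝ) (v : EuclideanSpace ℝ ι) :
    ∑ i, L (EuclideanSpace.single i 1) * v i = L v := by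
  conv_rhs => rw [← (EuclideanSpace.basisFun ι ℝ).sum_repr v]
  simp [map_sum, mul_comm]

theorem divergence_smul {f : EuclideanSpace ℝ ι → ℝ} (hf : DifferentiableAt ℝ f y)
    (hX : DifferentiableAt ℝ X y) :
    divergence (f • X) y = f y * divergence X y + fderiv ℝ f y (X y) := by
  rw [divergence, (hf.hasFDerivAt.smul hX.hasFDerivAt).fderiv]
  simp [divergence, Finset.sum_add_distrib, Finset.mul_sum, sum_apply_single_mul]

end Divergence

namespace Real

theorem deriv_smoothTransition_nonneg (s : ℝ) : 0 ≤ deriv smoothTransition s :=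
  smoothTransition.monotone.deriv_nonneg

theorem deriv_smoothTransition_of_nonpos {s : ℝ} (hs : s ≤ 0) : deriv smoothTransition s = 0 :=
  IsLocalMin.deriv_eq_zero <| IsMinOn.isLocalMin (s := univ)
    (fun t _ => by simp [smoothTransition.zero_of_nonpos hs, smoothTransition.nonneg t])
    Filter.univ_mem

theorem deriv_smoothTransition_of_one_le {s : ℝ} (hs : 1 ≤ s) : deriv smoothTransition s = 0 :=
  IsLocalMax.deriv_eq_zero <| IsMaxOn.isLocalMax (s := univ)
    (fun t _ => by simp [smoothTransition.one_of_one_le hs, smoothTransition.le_one t])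
    Filter.univ_mem

theorem exists_deriv_smoothTransition_le : ∃ C, ∀ s, deriv smoothTransition s ≤ C := by
  have hc : HasCompactSupport (deriv smoothTransition) :=
    HasCompactSupport.intro (K := Icc 0 1) isCompact_Icc fun s hs => by
      rcases not_and_or.1 hs with h | h
      · exact deriv_smoothTransition_of_nonpos (not_le.1 h).le
      · exact deriv_smoothTransition_of_one_le (not_le.1 h).le
  obtain ⟨C, hC⟩ := (smoothTransition.contDiff (n := 2)).continuous_deriv (by norm_num)
    |>.bounded_above_of_compact_support hc
  exact ⟨C, fun s => (le_abs_self _).trans (hC s)⟩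

end Real

theorem tendsto_measureReal_preimage_Ioo_zero {α : Type*} [MeasurableSpace α] {μ : Measure α}
    {q : α → ℝ} (hq : Measurable q) (hfin : μ (q ⁻¹' Ioi 0) ≠ ∞) :
    Tendsto (fun ε => μ.real (q ⁻¹' Ioo 0 ε)) (𝓝[>] 0) (𝓝 0) := by
  have h := tendsto_measure_biInter_gt (μ := μ) (s := fun ε => q ⁻¹' Ioo 0 ε) (a := (0 : ℝ))
    (fun ε _ => (hq measurableSet_Ioo).nullMeasurableSet)
    (fun i j _ hij => preimage_mono (Ioo_subset_Ioo_right hij))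
    ⟨1, one_pos, measure_ne_top_of_subset (preimage_mono Ioo_subset_Ioi_self) hfin⟩
  have hempty : (⋂ ε > (0 : ℝ), q ⁻¹' Ioo 0 ε) = ∅ := by
    refine eq_empty_of_forall_notMem fun y hy => ?_
    simp only [mem_iInter, mem_preimage, mem_Ioo] at hy
    exact lt_irrefl _ (hy (q y) (hy 1 one_pos).1).2
  rw [hempty, measure_empty] at h
  simpa [Function.comp_def, measureReal_def] using
    (ENNReal.tendsto_toReal ENNReal.zero_ne_top).comp h

theorem setIntegral_le_mul_add_mul_of_le_add_indicator {α : Type*} [MeasurableSpace α]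
    {μ : Measure α} {f : α → ℝ} {s A : Set α} {c K : ℝ} (hs : MeasurableSet s) (hsμ : μ s ≠ ∞)
    (hA : MeasurableSet A) (hAμ : μ A ≠ ∞) (hK : 0 ≤ K) (hf : IntegrableOn f s μ)
    (h : ∀ y ∈ s, f y ≤ c + A.indicator (fun _ => K) y) :
    ∫ y in s, f y ∂μ ≤ c * μ.real s + K * μ.real A := by
  have hind : Integrable (A.indicator fun _ => K) μ :=
    (integrable_indicator_iff hA).2 (integrableOn_const hAμ)
  have hc : IntegrableOn (fun _ => c) s μ := integrableOn_const hsμ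
  calc ∫ y in s, f y ∂μ ≤ ∫ y in s, (c + A.indicator (fun _ => K) y) ∂μ :=
        setIntegral_mono_on hf (hc.add hind.integrableOn) hs h
    _ = c * μ.real s + ∫ y in s, A.indicator (fun _ => K) y ∂μ := by
        rw [integral_add hc hind.integrableOn, setIntegral_const, smul_eq_mul, mul_comm]
    _ ≤ c * μ.real s + ∫ y, A.indicator (fun _ => K) y ∂μ := by
        grw [setIntegral_le_integral hind (Filter.Eventually.of_forall
          fun y => indicator_nonneg (fun _ _ => hK) y)]
    _ = c * μ.real s + K * μ.real A := by
        rw [integral_indicator_const _ hA, smul_eq_mul, mul_comm K]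

theorem measure_sdiff_eq_add_of_subset {α : Type*} [MeasurableSpace α] {μ : Measure α}
    {E F B : Set α} (hB : B ⊆ E) (hBF : MeasurableSet (B \ F)) :
    μ (E \ F) = μ (E \ (F ∪ B)) + μ (B \ F) := by
  rw [← measure_union (disjoint_left.2 fun _ h h' => h.2 (Or.inr h'.1)) hBF]
  congr 1
  ext y
  have := @hB y
  simp only [mem_union, Set.mem_sdiff]
  tauto

section Cutoff

variable {E : Type*} [NormedAddCommGroup E]

noncomputable def ballCutoff (x : E) (r ε : ℝ) (y : E) : ℝ :=
  Real.smoothTransition ((r ^ 2 - ‖y - x‖ ^ 2) / ε)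

variable {x y : E} {r ε : ℝ}

theorem ballCutoff_nonneg : 0 ≤ ballCutoff x r ε y := Real.smoothTransition.nonneg _

theorem ballCutoff_le_one : ballCutoff x r ε y ≤ 1 := Real.smoothTransition.le_one _

theorem sq_sub_sq_norm_pos_iff (hr : 0 ≤ r) : 0 < r ^ 2 - ‖y - x‖ ^ 2 ↔ y ∈ ball x r := by
  rw [mem_ball, dist_eq_norm, sub_pos, pow_lt_pow_iff_left₀ (norm_nonneg _) hr two_ne_zero]

theorem sq_sub_sq_norm_nonpos_of_notMem_ball (hr : 0 ≤ r) (hy : y ∉ ball x r) :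
    r ^ 2 - ‖y - x‖ ^ 2 ≤ 0 :=
  not_lt.1 fun h => hy ((sq_sub_sq_norm_pos_iff hr).1 h)

theorem ballCutoff_of_notMem_ball (hr : 0 ≤ r) (hε : 0 ≤ ε) (hy : y ∉ ball x r) :
    ballCutoff x r ε y = 0 :=
  Real.smoothTransition.zero_of_nonpos
    (div_nonpos_of_nonpos_of_nonneg (sq_sub_sq_norm_nonpos_of_notMem_ball hr hy) hε)

theorem ballCutoff_of_le (hε : 0 < ε) (hy : ε ≤ r ^ 2 - ‖y - x‖ ^ 2) :
    ballCutoff x r ε y = 1 :=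
  Real.smoothTransition.one_of_one_le ((one_le_div hε).2 hy)

theorem preimage_Ioi_sq_sub_sq_norm_subset_ball (hr : 0 ≤ r) :
    (fun z => r ^ 2 - ‖z - x‖ ^ 2) ⁻¹' Ioi 0 ⊆ ball x r :=
  fun _ hy => (sq_sub_sq_norm_pos_iff hr).1 hy

variable [InnerProductSpace ℝ E]

theorem contDiff_ballCutoff : ContDiff ℝ 1 (ballCutoff x r ε) :=
  Real.smoothTransition.contDiff.comp
    ((contDiff_const.sub ((contDiff_id.sub contDiff_const).norm_sq ℝ)).div_const ε)

theorem hasFDerivAt_ballCutoff :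
    HasFDerivAt (ballCutoff x r ε)
      ((-(2 / ε) * deriv Real.smoothTransition ((r ^ 2 - ‖y - x‖ ^ 2) / ε)) •
        innerSL ℝ (y - x)) y := by
  have hq := (((hasFDerivAt_id y).sub_const x).norm_sq.const_sub (r ^ 2)).mul_const ε⁻¹
  simp only [id, ← div_eq_mul_inv] at hq
  have hS := (Real.smoothTransition.contDiff (n := 1)).differentiable one_ne_zero
    ((r ^ 2 - ‖y - x‖ ^ 2) / ε)
  refine (hS.hasDerivAt.comp_hasFDerivAt y hq).congr_fderiv ?_
  ext v
  simp
  ring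

theorem fderiv_ballCutoff_of_notMem_ball (hr : 0 ≤ r) (hε : 0 ≤ ε) (hy : y ∉ ball x r) :
    fderiv ℝ (ballCutoff x r ε) y = 0 := by
  rw [hasFDerivAt_ballCutoff.fderiv, Real.deriv_smoothTransition_of_nonpos
    (div_nonpos_of_nonpos_of_nonneg (sq_sub_sq_norm_nonpos_of_notMem_ball hr hy) hε)]
  simp

theorem fderiv_ballCutoff_of_le (hε : 0 < ε) (hy : ε ≤ r ^ 2 - ‖y - x‖ ^ 2) :
    fderiv ℝ (ballCutoff x r ε) y = 0 := by
  rw [hasFDerivAt_ballCutoff.fderiv,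
    Real.deriv_smoothTransition_of_one_le ((one_le_div hε).2 hy)]
  simp

end Cutoff

section BallCorrection

variable {E : Type*} [NormedAddCommGroup E] [InnerProductSpace ℝ E]

noncomputable def radialField (x : E) (r : ℝ) (y : E) : E := r⁻¹ • (y - x)

noncomputable def ballCorrection (φ : E → E) (x : E) (r ε : ℝ) : E → E :=
  ballCutoff x r ε • (radialField x r - φ)

variable {φ : E → E} {x y : E} {r ε : ℝ}

theorem norm_radialField_le (hr : 0 < r) (hy : y ∈ ball x r) : ‖radialField x r y‖ ≤ 1 := by
  rw [mem_ball, dist_eq_norm] at hy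
  rw [radialField, norm_smul, norm_inv, Real.norm_of_nonneg hr.le, inv_mul_le_one₀ hr]
  exact hy.le

theorem differentiableAt_radialField : DifferentiableAt ℝ (radialField x r) y :=
  (differentiableAt_id.sub_const x).const_smul r⁻¹

theorem DifferentiableAt.ballCorrection (hφ : DifferentiableAt ℝ φ y) :
    DifferentiableAt ℝ (ballCorrection φ x r ε) y :=
  hasFDerivAt_ballCutoff.differentiableAt.smul (differentiableAt_radialField.sub hφ)

theorem contDiff_ballCorrection (hφ : ContDiff ℝ 1 φ) : ContDiff ℝ 1 (ballCorrection φ x r ε) :=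
  contDiff_ballCutoff.smul (((contDiff_id.sub contDiff_const).const_smul r⁻¹).sub hφ)

theorem ballCorrection_of_notMem_ball (hr : 0 ≤ r) (hε : 0 ≤ ε) (hy : y ∉ ball x r) :
    ballCorrection φ x r ε y = 0 := by
  simp [ballCorrection, ballCutoff_of_notMem_ball hr hε hy]

theorem hasCompactSupport_ballCorrection [ProperSpace E] (hr : 0 ≤ r) (hε : 0 ≤ ε) :
    HasCompactSupport (ballCorrection φ x r ε) :=
  HasCompactSupport.intro (isCompact_closedBall x r) fun _ hy =>
    ballCorrection_of_notMem_ball hr hε fun h => hy (ball_subset_closedBall h)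

theorem norm_add_ballCorrection_le (hφ1 : ∀ y, ‖φ y‖ ≤ 1) (hr : 0 < r) (hε : 0 ≤ ε) :
    ‖φ y + ballCorrection φ x r ε y‖ ≤ 1 := by
  by_cases hy : y ∈ ball x r
  · have hmem := (convex_closedBall (0 : E) 1).add_smul_sub_mem
      (mem_closedBall_zero_iff.2 (hφ1 y))
      (mem_closedBall_zero_iff.2 (norm_radialField_le hr hy))
      ⟨ballCutoff_nonneg (x := x) (r := r) (ε := ε) (y := y), ballCutoff_le_one⟩
    exact mem_closedBall_zero_iff.1 hmem
  · rw [ballCorrection_of_notMem_ball hr.le hε hy, add_zero]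
    exact hφ1 y

theorem inner_radialField_sub_ge {v : E} (hv : ‖v‖ ≤ 1) (hr : 0 < r) (hy : y ∈ ball x r) :
    -((r ^ 2 - ‖y - x‖ ^ 2) / r) ≤ inner ℝ (y - x) (radialField x r y - v) := by
  have hcs : inner ℝ (y - x) v ≤ ‖y - x‖ :=
    (real_inner_le_norm _ _).trans (mul_le_of_le_one_right (norm_nonneg _) hv)
  have hkey : -((r ^ 2 - ‖y - x‖ ^ 2) / r) = r⁻¹ * ‖y - x‖ ^ 2 - r := by
    field_simp
    ring
  rw [mem_ball, dist_eq_norm] at hy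
  rw [radialField, inner_sub_right, real_inner_smul_right, real_inner_self_eq_norm_sq, hkey]
  linarith

/-- The gradient of the cutoff is of size `1 / ε`, but near the sphere, where it lives, the radial
component of `radialField x r - v` is `O(ε)`; so the product stays bounded. -/
theorem fderiv_ballCutoff_radialField_sub_le {v : E} {C : ℝ} (hv : ‖v‖ ≤ 1)
    (hC : ∀ s, deriv Real.smoothTransition s ≤ C) (hr : 0 < r) (hε : 0 < ε) (hy : y ∈ ball x r)
    (hyε : r ^ 2 - ‖y - x‖ ^ 2 ≤ ε) :
    fderiv ℝ (ballCutoff x r ε) y (radialField x r y - v) ≤ 2 * C / r := by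
  set q := r ^ 2 - ‖y - x‖ ^ 2
  set S' := deriv Real.smoothTransition (q / ε)
  set I := inner ℝ (y - x) (radialField x r y - v)
  have hI : -I ≤ q / r := neg_le.1 (inner_radialField_sub_ge hv hr hy)
  have hS' : 0 ≤ 2 / ε * S' := mul_nonneg (by positivity) (Real.deriv_smoothTransition_nonneg _)
  have hqε : q / ε ≤ 1 := (div_le_one hε).2 hyε
  have hq0 : 0 ≤ q / ε := div_nonneg ((sq_sub_sq_norm_pos_iff hr.le).2 hy).le hε.le
  have hC0 : 0 ≤ C := (Real.deriv_smoothTransition_nonneg 0).trans (hC 0)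
  rw [hasFDerivAt_ballCutoff.fderiv, smul_apply, innerSL_apply_apply, smul_eq_mul]
  calc -(2 / ε) * S' * I = 2 / ε * S' * -I := by ring
    _ ≤ 2 / ε * S' * (q / r) := mul_le_mul_of_nonneg_left hI hS'
    _ = 2 / r * S' * (q / ε) := by ring
    _ ≤ 2 / r * C * 1 := by
      gcongr
      exact hC _
    _ = 2 * C / r := by ring

end BallCorrection

section DivergenceBallCorrection

variable {ι : Type*} [Fintype ι] [DecidableEq ι]
  {φ : EuclideanSpace ℝ ι → EuclideanSpace ℝ ι} {x y : EuclideanSpace ℝ ι} {r ε : ℝ}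

theorem divergence_radialField : divergence (radialField x r) y = Fintype.card ι / r := by
  have : fderiv ℝ (radialField x r) y = r⁻¹ • ContinuousLinearMap.id ℝ _ :=
    (((hasFDerivAt_id y).sub_const x).const_smul r⁻¹).fderiv
  simp [divergence, this, div_eq_mul_inv]

theorem divergence_ballCorrection (hφ : DifferentiableAt ℝ φ y) :
    divergence (ballCorrection φ x r ε) y =
      ballCutoff x r ε y * (Fintype.card ι / r - divergence φ y) +
        fderiv ℝ (ballCutoff x r ε) y (radialField x r y - φ y) := by
  rw [ballCorrection, divergence_smul hasFDerivAt_ballCutoff.differentiableAt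
    (differentiableAt_radialField.sub hφ), divergence_sub differentiableAt_radialField hφ,
    divergence_radialField]
  rfl

theorem divergence_ballCorrection_of_notMem_ball (hφ : DifferentiableAt ℝ φ y) (hr : 0 ≤ r)
    (hε : 0 ≤ ε) (hy : y ∉ ball x r) : divergence (ballCorrection φ x r ε) y = 0 := by
  simp [divergence_ballCorrection hφ, ballCutoff_of_notMem_ball hr hε hy,
    fderiv_ballCutoff_of_notMem_ball hr hε hy]

theorem divergence_add_ballCorrection_le {M C : ℝ} (hφ : DifferentiableAt ℝ φ y)
    (hφ1 : ‖φ y‖ ≤ 1) (hM : divergence φ y ≤ M) (hM0 : 0 ≤ M)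
    (hC : ∀ s, deriv Real.smoothTransition s ≤ C) (hr : 0 < r) (hε : 0 < ε) (hy : y ∈ ball x r) :
    divergence (φ + ballCorrection φ x r ε) y ≤ Fintype.card ι / r +
      ((fun z => r ^ 2 - ‖z - x‖ ^ 2) ⁻¹' Ioo 0 ε).indicator (fun _ => M + 2 * C / r) y := by
  set q := r ^ 2 - ‖y - x‖ ^ 2
  have hC0 : 0 ≤ C := (Real.deriv_smoothTransition_nonneg 0).trans (hC 0)
  rw [divergence_add hφ hφ.ballCorrection, divergence_ballCorrection hφ]
  rcases le_or_gt ε q with hq | hq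
  · rw [ballCutoff_of_le hε hq, fderiv_ballCutoff_of_le hε hq]
    simp only [one_mul, zero_apply, add_zero, add_sub_cancel]
    exact le_add_of_nonneg_right (indicator_nonneg (fun _ _ => by positivity) _)
  · rw [indicator_of_mem (s := (fun z => r ^ 2 - ‖z - x‖ ^ 2) ⁻¹' Ioo 0 ε)
      ⟨(sq_sub_sq_norm_pos_iff hr.le).2 hy, hq⟩]
    have hgrad := fderiv_ballCutoff_radialField_sub_le hφ1 hC hr hε hy hq.le
    have hη0 : 0 ≤ ballCutoff x r ε y := ballCutoff_nonneg
    have hη1 : ballCutoff x r ε y ≤ 1 := ballCutoff_le_one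
    have hcard : 0 ≤ (Fintype.card ι : ℝ) / r := by positivity
    nlinarith

end DivergenceBallCorrection

section Estimate

variable {ι : Type*} [Fintype ι] [DecidableEq ι] {φ : EuclideanSpace ℝ ι → EuclideanSpace ℝ ι}
  {F : Set (EuclideanSpace ℝ ι)} {x : EuclideanSpace ℝ ι} {r : ℝ}

theorem setIntegral_union_ball_divergence_le {ε M C : ℝ} (hφ : ContDiff ℝ 1 φ)
    (hφc : HasCompactSupport φ) (hφ1 : ∀ y, ‖φ y‖ ≤ 1) (hM : ∀ y, divergence φ y ≤ M)
    (hM0 : 0 ≤ M) (hC : ∀ s, deriv Real.smoothTransition s ≤ C) (hr : 0 < r) (hε : 0 < ε)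
    (hF : MeasurableSet F) :
    ∫ y in F ∪ ball x r, divergence φ y ≤
      (∫ y in F, divergence (φ + ballCorrection φ x r ε) y) +
        Fintype.card ι / r * volume.real (ball x r \ F) +
        (M + 2 * C / r) * volume.real ((fun z => r ^ 2 - ‖z - x‖ ^ 2) ⁻¹' Ioo 0 ε) := by
  set W := ballCorrection φ x r ε
  have hW : ContDiff ℝ 1 W := contDiff_ballCorrection hφ
  have hWc : HasCompactSupport W := hasCompactSupport_ballCorrection hr.le hε.le
  have hφd (y) : DifferentiableAt ℝ φ y := hφ.differentiable one_ne_zero y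
  have hψ_int : Integrable (divergence (φ + W)) := integrable_divergence (hφ.add hW) (hφc.add hWc)
  have hdiv (y) : divergence (φ + W) y = divergence φ y + divergence W y :=
    divergence_add (hφd y) (hφd y).ballCorrection
  have hW_zero : ∫ y in F ∪ ball x r, divergence W y = 0 :=
    setIntegral_divergence_eq_zero hW hWc fun y hy =>
      divergence_ballCorrection_of_notMem_ball (hφd y) hr.le hε.le fun h => hy (Or.inr h)
  have hsame : ∫ y in F ∪ ball x r, divergence φ y = ∫ y in F ∪ ball x r, divergence (φ + W) y := by
    simp_rw [hdiv]
    rw [integral_add (integrable_divergence hφ hφc).integrableOn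
      (integrable_divergence hW hWc).integrableOn, hW_zero, add_zero]
  have hsplit : ∫ y in F ∪ ball x r, divergence (φ + W) y =
      (∫ y in F, divergence (φ + W) y) + ∫ y in ball x r \ F, divergence (φ + W) y := by
    rw [← union_sdiff_self]
    exact setIntegral_union disjoint_sdiff_self_right (measurableSet_ball.diff hF)
      hψ_int.integrableOn hψ_int.integrableOn
  have hC0 : 0 ≤ C := (Real.deriv_smoothTransition_nonneg 0).trans (hC 0)
  have hq : Measurable fun z : EuclideanSpace ℝ ι => r ^ 2 - ‖z - x‖ ^ 2 := by fun_prop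
  have hbound := setIntegral_le_mul_add_mul_of_le_add_indicator (measurableSet_ball.diff hF)
    (measure_ne_top_of_subset sdiff_subset measure_ball_lt_top.ne) (hq measurableSet_Ioo)
    (measure_ne_top_of_subset
      ((preimage_mono Ioo_subset_Ioi_self).trans (preimage_Ioi_sq_sub_sq_norm_subset_ball hr.le))
      measure_ball_lt_top.ne)
    (by positivity) hψ_int.integrableOn fun y hy =>
      divergence_add_ballCorrection_le (hφd y) (hφ1 y) (hM y) hM0 hC hr hε hy.1
  linarith

theorem exists_setIntegral_union_ball_divergence_le {δ : ℝ} (hφ : ContDiff ℝ 1 φ)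
    (hφc : HasCompactSupport φ) (hφ1 : ∀ y, ‖φ y‖ ≤ 1) (hr : 0 < r) (hF : MeasurableSet F)
    (hδ : 0 < δ) :
    ∃ ψ : EuclideanSpace ℝ ι → EuclideanSpace ℝ ι, ContDiff ℝ 1 ψ ∧ HasCompactSupport ψ ∧
      (∀ y, ‖ψ y‖ ≤ 1) ∧
      ∫ y in F ∪ ball x r, divergence φ y ≤
        (∫ y in F, divergence ψ y) + Fintype.card ι / r * volume.real (ball x r \ F) + δ := by
  obtain ⟨M, hM⟩ := hφ.continuous_divergence.bounded_above_of_compact_support hφc.divergence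
  have hM0 : 0 ≤ M := (norm_nonneg _).trans (hM 0)
  obtain ⟨C, hC⟩ := Real.exists_deriv_smoothTransition_le
  have hq : Measurable fun z : EuclideanSpace ℝ ι => r ^ 2 - ‖z - x‖ ^ 2 := by fun_prop
  have hsmall := (tendsto_measureReal_preimage_Ioo_zero (μ := volume) hq (measure_ne_top_of_subset
    (preimage_Ioi_sq_sub_sq_norm_subset_ball hr.le) measure_ball_lt_top.ne)).const_mul
    (M + 2 * C / r)
  rw [mul_zero] at hsmall
  obtain ⟨ε, hεδ, hε⟩ := ((hsmall.eventually (gt_mem_nhds hδ)).and self_mem_nhdsWithin).exists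
  refine ⟨φ + ballCorrection φ x r ε, hφ.add (contDiff_ballCorrection hφ),
    hφc.add (hasCompactSupport_ballCorrection hr.le (hε.le)),
    fun y => norm_add_ballCorrection_le hφ1 hr (hε.le), ?_⟩
  linarith [setIntegral_union_ball_divergence_le hφ hφc hφ1 (fun y => (le_abs_self _).trans (hM y))
    hM0 hC hr hε hF (x := x)]

end Estimate

theorem ofReal_setIntegral_divergence_le_perim {n : ℕ} {F : Set (EuclideanSpace ℝ (Fin n))}
    {ψ : EuclideanSpace ℝ (Fin n) → EuclideanSpace ℝ (Fin n)} (hψ : ContDiff ℝ 1 ψ)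
    (hψc : HasCompactSupport ψ) (hψ1 : ∀ y, ‖ψ y‖ ≤ 1) :
    ENNReal.ofReal (∫ y in F, divergence ψ y) ≤ perim n F univ :=
  le_iSup_of_le ψ <| le_iSup_of_le hψ <| le_iSup_of_le hψc <| le_iSup_of_le (subset_univ _) <|
    le_iSup_of_le hψ1 le_rfl

theorem perim_union_ball_le {n : ℕ} {F : Set (EuclideanSpace ℝ (Fin n))}
    (x : EuclideanSpace ℝ (Fin n)) {r : ℝ} (hr : 0 < r) (hF : MeasurableSet F) :
    perim n (F ∪ ball x r) univ ≤
      perim n F univ + ENNReal.ofReal (n / r) * volume (ball x r \ F) := by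
  refine iSup₂_le fun φ hφ => iSup₂_le fun hφc _ => iSup_le fun hφ1 => ?_
  refine ENNReal.le_of_forall_pos_le_add fun δ hδ _ => ?_
  obtain ⟨ψ, hψ, hψc, hψ1, hle⟩ :=
    exists_setIntegral_union_ball_divergence_le hφ hφc hφ1 hr hF (x := x) (NNReal.coe_pos.2 hδ)
  rw [Fintype.card_fin] at hle
  calc ENNReal.ofReal (∫ y in F ∪ ball x r, divergence φ y)
      ≤ ENNReal.ofReal (∫ y in F, divergence ψ y) +
          ENNReal.ofReal (n / r * volume.real (ball x r \ F)) + ENNReal.ofReal δ := by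
        grw [hle, ENNReal.ofReal_add_le, ENNReal.ofReal_add_le]
    _ ≤ perim n F univ + ENNReal.ofReal (n / r) * volume (ball x r \ F) + δ := by
        rw [ENNReal.ofReal_mul (by positivity), measureReal_def,
          ENNReal.ofReal_toReal (measure_ne_top_of_subset sdiff_subset measure_ball_lt_top.ne),
          ENNReal.ofReal_coe_nnreal]
        grw [ofReal_setIntegral_divergence_le_perim hψ hψc hψ1]

theorem stmt11_general (n : ℕ) (E : Set (EuclideanSpace ℝ (Fin n))) (hEvol : volume E < ⊤)
    (x : EuclideanSpace ℝ (Fin n)) (r : ℝ) (hr : 0 < r) (hball : ball x r ⊆ E)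
    (l : ℝ) (hl : (n : ℝ) / r ≤ l)
    (F : Set (EuclideanSpace ℝ (Fin n))) (hFm : MeasurableSet F)
    (hFper : perim n F Set.univ < ⊤) :
    perim n (F ∪ ball x r) Set.univ +
        ENNReal.ofReal l * volume (E \ (F ∪ ball x r)) ≤
      perim n F Set.univ + ENNReal.ofReal l * volume (E \ F) ∧
    ((n : ℝ) / r < l →
      perim n (F ∪ ball x r) Set.univ +
          ENNReal.ofReal l * volume (E \ (F ∪ ball x r)) =
        perim n F Set.univ + ENNReal.ofReal l * volume (E \ F) →
      volume (ball x r \ F) = 0) := by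
  have hper := perim_union_ball_le x hr hFm
  rw [measure_sdiff_eq_add_of_subset hball (measurableSet_ball.diff hFm), mul_add]
  refine ⟨?_, fun hlt heq => ?_⟩
  · grw [hper, ENNReal.ofReal_le_ofReal hl]
    exact (add_right_comm _ _ _).le.trans (add_assoc _ _ _).le
  · by_contra hb
    have hfin : perim n F univ + ENNReal.ofReal l * volume (E \ (F ∪ ball x r)) ≠ ⊤ :=
      ENNReal.add_ne_top.2 ⟨hFper.ne, ENNReal.mul_ne_top ENNReal.ofReal_ne_top
        (measure_ne_top_of_subset sdiff_subset hEvol.ne)⟩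
    have hle : ENNReal.ofReal l * volume (ball x r \ F) ≤
        ENNReal.ofReal (n / r) * volume (ball x r \ F) := by
      rw [← ENNReal.add_le_add_iff_left hfin, add_assoc, ← heq]
      grw [hper]
      exact (add_right_comm _ _ _).le
    exact hle.not_gt ((ENNReal.mul_lt_mul_iff_left hb (measure_ne_top_of_subset sdiff_subset
      measure_ball_lt_top.ne)).2 ((ENNReal.ofReal_lt_ofReal_iff_of_nonneg (by positivity)).2 hlt))

/-- minimizers contain balls: if `B_r(x) ⊆ E`, `λ ≥ n/r`, then for every
measurable `F ⊆ E` of finite perimeter one has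
`P(F ∪ B_r(x)) + λ|E ∖ (F ∪ B_r(x))| ≤ P(F) + λ|E ∖ F|`; if `λ > n/r`, equality forces
`|B_r(x) ∖ F| = 0`. -/
theorem stmt11 (n : ℕ) (hn : 2 ≤ n) (E : Set (EuclideanSpace ℝ (Fin n)))
    (hEm : MeasurableSet E) (hEper : perim n E Set.univ < ⊤) (hEvol : volume E < ⊤)
    (x : EuclideanSpace ℝ (Fin n)) (r : ℝ) (hr : 0 < r) (hball : ball x r ⊆ E)
    (l : ℝ) (hl : (n : ℝ) / r ≤ l)
    (F : Set (EuclideanSpace ℝ (Fin n))) (hFm : MeasurableSet F) (hFE : F ⊆ E)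
    (hFper : perim n F Set.univ < ⊤) :
    perim n (F ∪ ball x r) Set.univ +
        ENNReal.ofReal l * volume (E \ (F ∪ ball x r)) ≤
      perim n F Set.univ + ENNReal.ofReal l * volume (E \ F) ∧
    ((n : ℝ) / r < l →
      perim n (F ∪ ball x r) Set.univ +
          ENNReal.ofReal l * volume (E \ (F ∪ ball x r)) =
        perim n F Set.univ + ENNReal.ofReal l * volume (E \ F) →
      volume (ball x r \ F) = 0) :=
  stmt11_general n E hEvol x r hr hball l hl F hFm hFper
end

section
/- Let α ∈ (0,1) and p ∈ [1, ∞) with α > (p-2)/(p+1). Define H : (-1,1)² → ℝ measurable with |H(x)| ≤ c(α)·( |x₁|^(α-1)·1_{D₁}(x) + |x₂|^(2α/(1+α) - 1)·1_{D₂}(x) ) where D₁ = {x ∈ (-1,1)² : |x₂| < |x₁|^(1+α)} and D₂ = {x ∈ (-1,1)² : |x₂| > |x₁|^(1+α)}. Then H ∈ L^p((-1,1)²). -/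
open MeasureTheory Set

/-- `D₁ = {x ∈ (-1,1)² : |x₂| < |x₁|^(1+α)}`. -/
def DOne (α : ℝ) : Set (ℝ × ℝ) :=
  (Set.Ioo (-1 : ℝ) 1 ×ˢ Set.Ioo (-1 : ℝ) 1) ∩ {x : ℝ × ℝ | |x.2| < |x.1| ^ (1 + α)}

/-- `D₂ = {x ∈ (-1,1)² : |x₂| > |x₁|^(1+α)}`. -/
def DTwo (α : ℝ) : Set (ℝ × ℝ) :=
  (Set.Ioo (-1 : ℝ) 1 ×ˢ Set.Ioo (-1 : ℝ) 1) ∩ {x : ℝ × ℝ | |x.1| ^ (1 + α) < |x.2|}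

/-!
On `D₁` the constraint `|x₂| < |x₁|^(1+α)` lets us trade a power `|x₁|^((1+α)t)` for
`|x₂|^(-t)`, and on `D₂` the reverse trade is possible. Off the coordinate axes each indicator
term is thus dominated by a product `|x₁|^a |x₂|^b`, which lies in `L^p` of a box as soon as
`a p > -1` and `b p > -1` (Fubini reduces this to one-variable integrability). The hypothesis
`α > (p-2)/(p+1)`, i.e. `(1-α)p < 2+α`, is exactly what leaves room for traded powers making
all four exponents admissible.
-/

theorem intervalIntegrable_abs_rpow {r : ℝ} (hr : -1 < r) (a b : ℝ) :
    IntervalIntegrable (fun x : ℝ => |x| ^ r) volume a b := by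
  have h_nonneg : ∀ c, 0 ≤ c → IntervalIntegrable (fun x : ℝ => |x| ^ r) volume 0 c := by
    intro c hc
    refine (intervalIntegral.intervalIntegrable_rpow' hr).congr_uIoo fun x hx => ?_
    rw [uIoo_of_le hc] at hx
    simp [abs_of_pos hx.1]
  have h_any : ∀ c, IntervalIntegrable (fun x : ℝ => |x| ^ r) volume 0 c := by
    intro c
    rcases le_total 0 c with hc | hc
    · exact h_nonneg c hc
    · rw [IntervalIntegrable.iff_comp_neg]
      simpa using h_nonneg (-c) (by linarith)
  exact (h_any a).symm.trans (h_any b)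

theorem memLp_abs_rpow_mul_abs_rpow {p a b : ℝ} (hp : 0 < p) (ha : -1 < a * p)
    (hb : -1 < b * p) (l₁ u₁ l₂ u₂ : ℝ) :
    MemLp (fun x : ℝ × ℝ => |x.1| ^ a * |x.2| ^ b) (ENNReal.ofReal p)
      (volume.restrict (Ioo l₁ u₁ ×ˢ Ioo l₂ u₂)) := by
  have hp0 : ENNReal.ofReal p ≠ 0 := by simpa using hp
  have hmeas : AEStronglyMeasurable (fun x : ℝ × ℝ => |x.1| ^ a * |x.2| ^ b)
      (volume.restrict (Ioo l₁ u₁ ×ˢ Ioo l₂ u₂)) :=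
    Measurable.aestronglyMeasurable (by fun_prop)
  rw [← memLp_norm_rpow_iff hmeas hp0 ENNReal.ofReal_ne_top, ENNReal.div_self hp0
    ENNReal.ofReal_ne_top, memLp_one_iff_integrable, ENNReal.toReal_ofReal hp.le]
  have h₁ := (intervalIntegrable_abs_rpow ha l₁ u₁).1.mono_set Ioo_subset_Ioc_self
  have h₂ := (intervalIntegrable_abs_rpow hb l₂ u₂).1.mono_set Ioo_subset_Ioc_self
  have hprod := h₁.mul_prod h₂
  rw [Measure.prod_restrict, ← Measure.volume_eq_prod] at hprod
  refine hprod.congr (Filter.Eventually.of_forall fun x => ?_)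
  simp only [Real.norm_eq_abs, abs_mul, abs_of_nonneg (Real.rpow_nonneg (abs_nonneg _) _)]
  rw [Real.mul_rpow (by positivity) (by positivity), ← Real.rpow_mul (abs_nonneg _),
    ← Real.rpow_mul (abs_nonneg _)]

theorem rpow_le_rpow_add_mul_mul_rpow_neg {u v k t : ℝ} (hu : 0 < u) (hv : 0 < v)
    (hvu : v ≤ u ^ k) (ht : 0 ≤ t) (a : ℝ) : u ^ a ≤ u ^ (a + k * t) * v ^ (-t) :=
  calc u ^ a = u ^ (a + k * t) * (u ^ k) ^ (-t) := by
        rw [← Real.rpow_mul hu.le, ← Real.rpow_add hu]; ring_nf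
    _ ≤ u ^ (a + k * t) * v ^ (-t) := by
        gcongr _ * ?_
        exact Real.rpow_le_rpow_of_nonpos hv hvu (neg_nonpos.mpr ht)

theorem rpow_le_rpow_neg_mul_mul_rpow_add {u v k t : ℝ} (hu : 0 < u) (huv : u ^ k ≤ v)
    (ht : 0 ≤ t) (b : ℝ) : v ^ b ≤ u ^ (-(k * t)) * v ^ (b + t) := by
  have hv : 0 < v := (Real.rpow_pos_of_pos hu k).trans_le huv
  calc v ^ b = v ^ (-t) * v ^ (b + t) := by rw [← Real.rpow_add hv]; ring_nf
    _ ≤ (u ^ k) ^ (-t) * v ^ (b + t) := by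
        gcongr ?_ * _
        exact Real.rpow_le_rpow_of_nonpos (Real.rpow_pos_of_pos hu k) huv (neg_nonpos.mpr ht)
    _ = u ^ (-(k * t)) * v ^ (b + t) := by rw [← Real.rpow_mul hu.le, mul_neg]

theorem indicator_DOne_le {α t : ℝ} (ht : 0 ≤ t) {x : ℝ × ℝ} (hx₁ : x.1 ≠ 0) (hx₂ : x.2 ≠ 0) :
    (DOne α).indicator (fun y => |y.1| ^ (α - 1)) x ≤
      |x.1| ^ (α - 1 + (1 + α) * t) * |x.2| ^ (-t) := by
  by_cases hx : x ∈ DOne α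
  · rw [indicator_of_mem hx]
    exact rpow_le_rpow_add_mul_mul_rpow_neg (abs_pos.mpr hx₁) (abs_pos.mpr hx₂) hx.2.le ht _
  · rw [indicator_of_notMem hx]
    positivity

theorem indicator_DTwo_le {α β t : ℝ} (ht : 0 ≤ t) {x : ℝ × ℝ} (hx₁ : x.1 ≠ 0) :
    (DTwo α).indicator (fun y => |y.2| ^ β) x ≤
      |x.1| ^ (-((1 + α) * t)) * |x.2| ^ (β + t) := by
  by_cases hx : x ∈ DTwo α
  · rw [indicator_of_mem hx]
    exact rpow_le_rpow_neg_mul_mul_rpow_add (abs_pos.mpr hx₁) hx.2.le ht _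
  · rw [indicator_of_notMem hx]
    positivity

theorem ae_fst_ne_and_snd_ne (a b : ℝ) : ∀ᵐ x : ℝ × ℝ, x.1 ≠ a ∧ x.2 ≠ b := by
  rw [Measure.volume_eq_prod]
  filter_upwards [Measure.quasiMeasurePreserving_fst.ae (volume.ae_ne a),
    Measure.quasiMeasurePreserving_snd.ae (volume.ae_ne b)] with x h₁ h₂
  exact ⟨h₁, h₂⟩

/-- a measurable `H` bounded by
`c(|x₁|^(α-1) 1_{D₁} + |x₂|^(2α/(1+α)-1) 1_{D₂})` lies in `L^p((-1,1)²)`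
whenever `α > (p-2)/(p+1)`. -/
theorem stmt16 (α p : ℝ) (hα : α ∈ Set.Ioo (0 : ℝ) 1) (hp : 1 ≤ p)
    (hcond : α > (p - 2) / (p + 1)) (c : ℝ) (hc : 0 ≤ c)
    (H : ℝ × ℝ → ℝ) (hHmeas : Measurable H)
    (hHbd : ∀ x ∈ Set.Ioo (-1 : ℝ) 1 ×ˢ Set.Ioo (-1 : ℝ) 1,
      |H x| ≤ c * (Set.indicator (DOne α) (fun y => |y.1| ^ (α - 1)) x +
        Set.indicator (DTwo α) (fun y => |y.2| ^ (2 * α / (1 + α) - 1)) x)) :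
    MemLp H (ENNReal.ofReal p)
      (volume.restrict (Set.Ioo (-1 : ℝ) 1 ×ˢ Set.Ioo (-1 : ℝ) 1)) := by
  have hp0 : 0 < p := by linarith
  have hα1 : 0 < 1 + α := by linarith [hα.1]
  have hq : (1 - α) * p < 2 + α := by
    rw [gt_iff_lt, div_lt_iff₀ (by linarith)] at hcond
    linarith
  -- `t` is `p` times the traded exponent: `t / p` on `D₁`, `t / ((1 + α) p)` on `D₂`.
  obtain ⟨t, ht_gt, ht_lt⟩ : ∃ t, max (max 0 (((1 - α) * p - 1) / (1 + α)))
      ((1 - α) * p - (1 + α)) < t ∧ t < 1 :=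
    exists_between (max_lt (max_lt one_pos (by rw [div_lt_one hα1]; linarith)) (by linarith))
  simp only [max_lt_iff] at ht_gt
  obtain ⟨⟨ht0, ht₁⟩, ht₂⟩ := ht_gt
  rw [div_lt_iff₀ hα1] at ht₁
  have hG₁ := memLp_abs_rpow_mul_abs_rpow hp0 (a := α - 1 + (1 + α) * (t / p)) (b := -(t / p))
    (by field_simp; linarith) (by field_simp; linarith) (-1) 1 (-1) 1
  have hG₂ := memLp_abs_rpow_mul_abs_rpow hp0 (a := -((1 + α) * (t / ((1 + α) * p))))
    (b := 2 * α / (1 + α) - 1 + t / ((1 + α) * p))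
    (by field_simp; linarith) (by field_simp; linarith) (-1) 1 (-1) 1
  refine ((hG₁.add hG₂).const_mul c).of_le hHmeas.aestronglyMeasurable ?_
  filter_upwards [ae_restrict_mem (measurableSet_Ioo.prod measurableSet_Ioo),
    ae_restrict_of_ae (ae_fst_ne_and_snd_ne 0 0)] with x hx ⟨hx₁, hx₂⟩
  rw [Real.norm_eq_abs, Real.norm_eq_abs]
  refine (hHbd x hx).trans (le_trans ?_ (le_abs_self _))
  simp only [Pi.add_apply]
  gcongr
  · exact indicator_DOne_le (by positivity) hx₁ hx₂
  · exact indicator_DTwo_le (by positivity) hx₁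
end
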